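/- arXiv:2504.03390 — 4 statements merged into one kernel-verified Lean document; each statement's English description precedes it below -/
import Mathlib

section
/- Suppose (H, c, ν) satisfies the Marchenko–Pastur relation. Then for every z̃ ∈ ℂ⁺ the companion transform satisfies s_ν̲(z̃) ≠ 0, the point φ_{ν,c}(z̃) lies in the spectral domain 𝔻_{H,c}(∞), and Φ_{H,c}(φ_{ν,c}(z̃)) = z̃. In particular φ_{ν,c} : ℂ⁺ → 𝔻_{H,c}(∞) is injective. -/
open MeasureTheory Filter Complex Set

noncomputable section

/-- The Stieltjes transform of a measure on `ℝ`. -/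
def St (μ : Measure ℝ) (z : ℂ) : ℂ := ∫ l, ((l : ℂ) - z)⁻¹ ∂μ

/-- The (topological) support of a measure on `ℝ`. -/
def msupport (μ : Measure ℝ) : Set ℝ := {x : ℝ | ∀ U ∈ nhds x, 0 < μ U}

/-- `(H, c, ν)` satisfies the Marchenko–Pastur relation. -/
def MPRel (H : Measure ℝ) (c : ℝ) (ν : Measure ℝ) : Prop :=
  IsProbabilityMeasure H ∧ H ≠ Measure.dirac 0 ∧
  IsCompact (msupport H) ∧ msupport H ⊆ Set.Ici 0 ∧
  0 < c ∧
  IsProbabilityMeasure ν ∧ ν ≠ Measure.dirac 0 ∧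
  IsCompact (msupport ν) ∧ msupport ν ⊆ Set.Ici 0 ∧
  ∀ z : ℂ, 0 < z.im →
    St ν z = (∫ l, ((l : ℂ) * (1 - (c : ℂ) * z * St ν z - (c : ℂ)) - z)⁻¹ ∂H) ∧
    0 < ((c : ℂ) * St ν z + ((c : ℂ) - 1) / z).im

/-- The map `Φ_{H,c}`. -/
def Phi (H : Measure ℝ) (c : ℝ) (z : ℂ) : ℂ := (1 - (c : ℂ) * z * St H z - (c : ℂ)) * z

/-- The spectral domain `𝔻_{H,c}(∞)`. -/
def Dinf (H : Measure ℝ) (c : ℝ) : Set ℂ := {z : ℂ | 0 < z.im ∧ 0 < (Phi H c z).im}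

/-- The companion transform `s_ν̲`. -/
def sUnder (ν : Measure ℝ) (c : ℝ) (z : ℂ) : ℂ := (c : ℂ) * St ν z - (1 - (c : ℂ)) / z

/-- The map `φ_{ν,c}`. -/
def phiInv (ν : Measure ℝ) (c : ℝ) (z : ℂ) : ℂ := -1 / sUnder ν c z

end

/-!
Write `u = s_ν̲(z̃)` and `A = 1 - c z̃ s_ν(z̃) - c`, so that `A = -u z̃`. The Marchenko–Pastur
relation gives `Im u > 0`, hence `u ≠ 0` and `w = φ_{ν,c}(z̃) = -1/u = z̃ / A` lies in `ℂ⁺`.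
Rescaling the integrand, `s_H(z̃ / A) = A · ∫ (λA - z̃)⁻¹ dH = A · s_ν(z̃)`, and then
`Φ_{H,c}(w) = (1 - c z̃ s_ν(z̃) - c) · z̃ / A = z̃`, so `w ∈ 𝔻_{H,c}(∞)`. Injectivity follows since
`Φ_{H,c}` is a left inverse of `φ_{ν,c}` on `ℂ⁺`.
-/

lemma St_div (μ : Measure ℝ) {z A : ℂ} (hA : A ≠ 0) :
    St μ (z / A) = A * ∫ l, ((l : ℂ) * A - z)⁻¹ ∂μ := by
  rw [St, ← integral_const_mul]
  congr 1 with l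
  rw [show (l : ℂ) - z / A = ((l : ℂ) * A - z) / A by field_simp, inv_div, div_eq_mul_inv]

lemma Phi_div_of_eq_integral (H : Measure ℝ) (c : ℝ) {z s : ℂ}
    (hA : 1 - (c : ℂ) * z * s - c ≠ 0)
    (hs : s = ∫ l, ((l : ℂ) * (1 - (c : ℂ) * z * s - c) - z)⁻¹ ∂H) :
    Phi H c (z / (1 - (c : ℂ) * z * s - c)) = z := by
  rw [Phi, St_div H hA, ← hs]
  field_simp

lemma im_neg_one_div_pos {u : ℂ} (hu : 0 < u.im) : 0 < (-1 / u).im := by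
  have hu0 : u ≠ 0 := fun h => by simp [h] at hu
  rw [neg_div, one_div, neg_im, inv_im, neg_div, neg_neg]
  exact div_pos hu (normSq_pos.mpr hu0)

lemma one_sub_mul_St_sub_eq (ν : Measure ℝ) (c : ℝ) {z : ℂ} (hz : z ≠ 0) :
    1 - (c : ℂ) * z * St ν z - c = -(sUnder ν c z * z) := by
  rw [sUnder]
  field_simp
  ring

lemma phiInv_eq_div (ν : Measure ℝ) (c : ℝ) {z : ℂ} (hz : z ≠ 0) :
    phiInv ν c z = z / (1 - (c : ℂ) * z * St ν z - c) := by
  rw [phiInv, one_sub_mul_St_sub_eq ν c hz, div_neg, neg_div, div_mul_cancel_right₀ hz, one_div]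

namespace MPRel

variable {H ν : Measure ℝ} {c : ℝ}

lemma St_eq_integral (hMP : MPRel H c ν) {z : ℂ} (hz : 0 < z.im) :
    St ν z = ∫ l, ((l : ℂ) * (1 - (c : ℂ) * z * St ν z - c) - z)⁻¹ ∂H :=
  (hMP.2.2.2.2.2.2.2.2.2 z hz).1

lemma sUnder_im_pos (hMP : MPRel H c ν) {z : ℂ} (hz : 0 < z.im) :
    0 < (sUnder ν c z).im := by
  have h := (hMP.2.2.2.2.2.2.2.2.2 z hz).2
  rwa [show (c : ℂ) * St ν z + ((c : ℂ) - 1) / z = sUnder ν c z by rw [sUnder]; ring] at h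

lemma sUnder_ne_zero (hMP : MPRel H c ν) {z : ℂ} (hz : 0 < z.im) : sUnder ν c z ≠ 0 :=
  fun h => by simpa [h] using hMP.sUnder_im_pos hz

lemma Phi_phiInv (hMP : MPRel H c ν) {z : ℂ} (hz : 0 < z.im) :
    Phi H c (phiInv ν c z) = z := by
  have hz0 : z ≠ 0 := fun h => by simp [h] at hz
  have hA : 1 - (c : ℂ) * z * St ν z - c ≠ 0 := by
    rw [one_sub_mul_St_sub_eq ν c hz0]
    exact neg_ne_zero.mpr (mul_ne_zero (hMP.sUnder_ne_zero hz) hz0)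
  rw [phiInv_eq_div ν c hz0]
  exact Phi_div_of_eq_integral H c hA (hMP.St_eq_integral hz)

end MPRel

theorem stmt0 (H ν : MeasureTheory.Measure ℝ) (c : ℝ) (hMP : MPRel H c ν) :
    (∀ z : ℂ, 0 < z.im →
      sUnder ν c z ≠ 0 ∧ phiInv ν c z ∈ Dinf H c ∧ Phi H c (phiInv ν c z) = z) ∧
    Set.InjOn (phiInv ν c) {z : ℂ | 0 < z.im} := by
  have hPhi : ∀ z : ℂ, 0 < z.im → Phi H c (phiInv ν c z) = z := fun z hz => hMP.Phi_phiInv hz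
  refine ⟨fun z hz => ⟨hMP.sUnder_ne_zero hz, ⟨?_, ?_⟩, hPhi z hz⟩, LeftInvOn.injOn hPhi⟩
  · exact im_neg_one_div_pos (hMP.sUnder_im_pos hz)
  · rwa [hPhi z hz]
end

section
/- Let H be a probability measure on ℝ with compact support contained in [0,∞) and let c > 0. Then Φ_{H,c} is injective on 𝔻_{H,c}(∞): if z₁, z₂ ∈ 𝔻_{H,c}(∞) and Φ_{H,c}(z₁) = Φ_{H,c}(z₂), then z₁ = z₂. -/
/-! Writing `f_z(λ) = λ / (λ - z)`, one has `Φ(z) = (1 - c) z - c z² s_H(z)`, and the pointwise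
identity `z₁²/(λ - z₁) - z₂²/(λ - z₂) = (z₁ - z₂)(f_{z₁}(λ) f_{z₂}(λ) - 1)` gives
`Φ(z₁) - Φ(z₂) = (z₁ - z₂)(1 - c ∫ f_{z₁} f_{z₂} dH)`.
Taking `z₂ = z̄₁` yields `Im Φ(z) = Im z · (1 - c ∫ |f_z|² dH)`, so on `𝔻_{H,c}(∞)` we have
`c ∫ |f_z|² dH < 1`. By `|ab| ≤ (|a|² + |b|²)/2` the factor `c ∫ f_{z₁} f_{z₂} dH` then has modulus
`< 1`, so `Φ(z₁) = Φ(z₂)` forces `z₁ = z₂`. -/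

open MeasureTheory Filter Complex Set

open ComplexConjugate

theorem norm_integral_mul_le_half_add {α : Type*} [MeasurableSpace α] {μ : Measure α}
    {f g : α → ℂ} (hf : Integrable (fun x ↦ ‖f x‖ ^ 2) μ) (hg : Integrable (fun x ↦ ‖g x‖ ^ 2) μ) :
    ‖∫ x, f x * g x ∂μ‖ ≤ (∫ x, ‖f x‖ ^ 2 ∂μ + ∫ x, ‖g x‖ ^ 2 ∂μ) / 2 :=
  calc ‖∫ x, f x * g x ∂μ‖ ≤ ∫ x, ‖f x * g x‖ ∂μ := norm_integral_le_integral_norm _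
    _ ≤ ∫ x, (‖f x‖ ^ 2 + ‖g x‖ ^ 2) / 2 ∂μ := by
        refine integral_mono_of_nonneg (ae_of_all _ fun _ ↦ norm_nonneg _) ((hf.add hg).div_const 2)
          (ae_of_all _ fun x ↦ ?_)
        dsimp only
        rw [norm_mul]
        linarith [two_mul_le_add_sq ‖f x‖ ‖g x‖]
    _ = (∫ x, ‖f x‖ ^ 2 ∂μ + ∫ x, ‖g x‖ ^ 2 ∂μ) / 2 := by rw [integral_div, integral_add hf hg]

noncomputable def mulResolvent (z : ℂ) (l : ℝ) : ℂ := l / (l - z)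

section Resolvent

variable {z z₁ z₂ : ℂ}

theorem ofReal_sub_ne_zero (hz : z.im ≠ 0) (l : ℝ) : (l : ℂ) - z ≠ 0 := fun h ↦
  hz (by simpa using congrArg Complex.im h)

theorem norm_inv_ofReal_sub_le (hz : z.im ≠ 0) (l : ℝ) : ‖((l : ℂ) - z)⁻¹‖ ≤ |z.im|⁻¹ := by
  rw [norm_inv]
  refine inv_anti₀ (abs_pos.2 hz) ?_
  simpa using Complex.abs_im_le_norm ((l : ℂ) - z)

theorem mulResolvent_eq_one_add (hz : z.im ≠ 0) (l : ℝ) :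
    mulResolvent z l = 1 + z * ((l : ℂ) - z)⁻¹ := by
  rw [mulResolvent]
  field_simp [ofReal_sub_ne_zero hz l]
  ring

theorem norm_mulResolvent_le (hz : z.im ≠ 0) (l : ℝ) :
    ‖mulResolvent z l‖ ≤ 1 + ‖z‖ * |z.im|⁻¹ := by
  rw [mulResolvent_eq_one_add hz]
  refine (norm_add_le _ _).trans ?_
  rw [norm_one, norm_mul]
  gcongr
  exact norm_inv_ofReal_sub_le hz l

theorem continuous_mulResolvent (hz : z.im ≠ 0) : Continuous (mulResolvent z) :=
  Complex.continuous_ofReal.div (Complex.continuous_ofReal.sub continuous_const)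
    (ofReal_sub_ne_zero hz)

theorem mulResolvent_conj (z : ℂ) (l : ℝ) : mulResolvent (conj z) l = conj (mulResolvent z l) := by
  simp [mulResolvent, map_div₀]

variable (μ : Measure ℝ) [IsFiniteMeasure μ]

theorem integrable_inv_ofReal_sub (hz : z.im ≠ 0) : Integrable (fun l : ℝ ↦ ((l : ℂ) - z)⁻¹) μ :=
  .of_bound ((Complex.continuous_ofReal.sub continuous_const).inv₀
    (ofReal_sub_ne_zero hz)).aestronglyMeasurable _ (ae_of_all _ (norm_inv_ofReal_sub_le hz))

theorem integrable_mulResolvent_mul (h₁ : z₁.im ≠ 0) (h₂ : z₂.im ≠ 0) :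
    Integrable (fun l ↦ mulResolvent z₁ l * mulResolvent z₂ l) μ :=
  .of_bound ((continuous_mulResolvent h₁).mul (continuous_mulResolvent h₂)).aestronglyMeasurable _
    (ae_of_all _ fun l ↦ by
      rw [norm_mul]
      exact mul_le_mul (norm_mulResolvent_le h₁ l) (norm_mulResolvent_le h₂ l) (norm_nonneg _)
        (by positivity))

theorem integrable_sq_norm_mulResolvent (hz : z.im ≠ 0) :
    Integrable (fun l ↦ ‖mulResolvent z l‖ ^ 2) μ :=
  (integrable_mulResolvent_mul μ hz hz).norm.congr (ae_of_all _ fun l ↦ by simp [sq])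

end Resolvent

section Phi

variable (H : Measure ℝ) (c : ℝ)

theorem Phi_eq (z : ℂ) : Phi H c z = (1 - c) * z - c * ∫ l, z ^ 2 * ((l : ℂ) - z)⁻¹ ∂H := by
  rw [integral_const_mul, Phi, St]
  ring

theorem Phi_conj (z : ℂ) : Phi H c (conj z) = conj (Phi H c z) := by
  simp [Phi, St, ← integral_conj]

variable [IsProbabilityMeasure H] {z z₁ z₂ : ℂ}

theorem Phi_sub_Phi (h₁ : z₁.im ≠ 0) (h₂ : z₂.im ≠ 0) :
    Phi H c z₁ - Phi H c z₂ =
      (z₁ - z₂) * (1 - c * ∫ l, mulResolvent z₁ l * mulResolvent z₂ l ∂H) := by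
  have hpt (l : ℝ) : z₁ ^ 2 * ((l : ℂ) - z₁)⁻¹ - z₂ ^ 2 * ((l : ℂ) - z₂)⁻¹ =
      (z₁ - z₂) * (mulResolvent z₁ l * mulResolvent z₂ l - 1) := by
    rw [mulResolvent, mulResolvent]
    field_simp [ofReal_sub_ne_zero h₁ l, ofReal_sub_ne_zero h₂ l]
    ring
  have hdiff : (∫ l, z₁ ^ 2 * ((l : ℂ) - z₁)⁻¹ ∂H) - ∫ l, z₂ ^ 2 * ((l : ℂ) - z₂)⁻¹ ∂H =
      (z₁ - z₂) * ((∫ l, mulResolvent z₁ l * mulResolvent z₂ l ∂H) - 1) := by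
    rw [← integral_sub ((integrable_inv_ofReal_sub H h₁).const_mul _)
      ((integrable_inv_ofReal_sub H h₂).const_mul _)]
    simp_rw [hpt]
    rw [integral_const_mul, integral_sub (integrable_mulResolvent_mul H h₁ h₂) (integrable_const 1)]
    simp
  rw [Phi_eq, Phi_eq]
  linear_combination (-(c : ℂ)) * hdiff

theorem im_Phi (hz : z.im ≠ 0) :
    (Phi H c z).im = z.im * (1 - c * ∫ l, ‖mulResolvent z l‖ ^ 2 ∂H) := by
  have h := Phi_sub_Phi H c hz (z₂ := conj z) (by simpa using hz)
  simp_rw [Phi_conj, Complex.sub_conj, mulResolvent_conj, Complex.mul_conj', ← Complex.ofReal_pow]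
    at h
  rw [integral_complex_ofReal] at h
  have him : 2 * (Phi H c z).im = 2 * z.im * (1 - c * ∫ l, ‖mulResolvent z l‖ ^ 2 ∂H) := by
    simpa using congrArg Complex.im h
  linarith

theorem mul_integral_sq_norm_mulResolvent_lt_one (hz : z ∈ Dinf H c) :
    c * ∫ l, ‖mulResolvent z l‖ ^ 2 ∂H < 1 := by
  have h := hz.2
  rw [im_Phi H c hz.1.ne'] at h
  linarith [(pos_iff_pos_of_mul_pos h).1 hz.1]

theorem one_sub_mul_integral_mulResolvent_mul_ne_zero (hc : 0 ≤ c) (h₁ : z₁ ∈ Dinf H c)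
    (h₂ : z₂ ∈ Dinf H c) : 1 - c * ∫ l, mulResolvent z₁ l * mulResolvent z₂ l ∂H ≠ 0 := by
  have hlt : ‖(c : ℂ) * ∫ l, mulResolvent z₁ l * mulResolvent z₂ l ∂H‖ < 1 :=
    calc _ = c * ‖∫ l, mulResolvent z₁ l * mulResolvent z₂ l ∂H‖ := by
          rw [norm_mul, Complex.norm_of_nonneg hc]
      _ ≤ c * ((∫ l, ‖mulResolvent z₁ l‖ ^ 2 ∂H + ∫ l, ‖mulResolvent z₂ l‖ ^ 2 ∂H) / 2) := by
          gcongr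
          exact norm_integral_mul_le_half_add (integrable_sq_norm_mulResolvent H h₁.1.ne')
            (integrable_sq_norm_mulResolvent H h₂.1.ne')
      _ < 1 := by
          linarith [mul_integral_sq_norm_mulResolvent_lt_one H c h₁,
            mul_integral_sq_norm_mulResolvent_lt_one H c h₂]
  exact sub_ne_zero.2 fun h ↦ hlt.ne (by rw [← h, norm_one])

end Phi

theorem stmt1_general (H : MeasureTheory.Measure ℝ) (c : ℝ)
    (hH : IsProbabilityMeasure H) (hc : 0 < c) :
    Set.InjOn (Phi H c) (Dinf H c) := by
  intro z₁ h₁ z₂ h₂ heq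
  have key := Phi_sub_Phi H c h₁.1.ne' h₂.1.ne'
  rw [heq, sub_self, eq_comm, mul_eq_zero, sub_eq_zero] at key
  exact key.resolve_right (one_sub_mul_integral_mulResolvent_mul_ne_zero H c hc.le h₁ h₂)

theorem stmt1 (H : MeasureTheory.Measure ℝ) (c : ℝ)
    (hH : IsProbabilityMeasure H) (hcomp : IsCompact (msupport H))
    (hpos : msupport H ⊆ Set.Ici 0) (hc : 0 < c) :
    Set.InjOn (Phi H c) (Dinf H c) :=
  stmt1_general H c hH hc
end

section
/- Suppose (H, c, ν) satisfies the Marchenko–Pastur relation, and let z ∈ ℂ⁺ satisfy Im((1 − c·z·s_H(z) − c)·z) > 0. Then s = s_H(z) satisfies the equation z·s + 1 = ∫_ℝ λ/(λ − (1 − c·z·s − c)·z) dν(λ), and it is the unique s ∈ ℂ⁺ with Im((1 − c·z·s − c)·z) > 0 satisfying this equation. -/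
/-
Put `w = u z` with `u = 1 - c z s_H(z) - c`. As `∫ λ/(λ - w) dν = 1 + w s_ν(w)`, the first claim says
`s_ν(w) = s_H(z)/u`; for the second, a solution `s` forces `s_ν(w) = s/u`, and then the coefficient
`1 - c w s_ν(w) - c` of the Marchenko–Pastur equation at `w` is `u`, which turns that equation into
`s/u = s_H(z)/u`.

For the first claim, `m = s_H(z)/u` solves the Marchenko–Pastur equation at `w`, with
`c m + (c - 1)/w = -1/z ∈ ℂ⁺`, so it suffices that for `w ∈ ℂ⁺` there is at most one solution `m` with
`v = c m + (c - 1)/w ∈ ℂ⁺`. With `f_v(λ) = λv/(1 + λv)` the equation reads `w v + 1 = c ∫ f_v dH`.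
Multiplying by `v̄` and taking imaginary parts gives `Im w |v|² = Im v (1 - c ∫ |f_v|² dH)`, so
`c ∫ |f_v|² dH < 1`. Two solutions `v₁ ≠ v₂` would give, through `(v₁ - v₂) f₁ f₂ = v₁ f₂ - v₂ f₁`,
`c ∫ f₁ f₂ dH = 1`, contradicting `|f₁ f₂| ≤ (|f₁|² + |f₂|²)/2`.
-/

open MeasureTheory Filter Complex Set

open scoped ComplexConjugate

section Kernel

variable {v : ℂ}

lemma one_add_ofReal_mul_ne_zero (hv : v.im ≠ 0) (l : ℝ) : 1 + (l : ℂ) * v ≠ 0 := by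
  intro h
  have hl : l = 0 := by simpa [hv] using congrArg im h
  simp [hl] at h

noncomputable def mpKernel (v : ℂ) (l : ℝ) : ℂ := l * v / (1 + l * v)

lemma norm_mpKernel_le (hv : v.im ≠ 0) (l : ℝ) : ‖mpKernel v l‖ ≤ ‖v‖ / |v.im| := by
  have hd := norm_pos_iff.2 (one_add_ofReal_mul_ne_zero hv l)
  have him : |l| * |v.im| ≤ ‖1 + (l : ℂ) * v‖ := by
    calc |l| * |v.im| = |(1 + (l : ℂ) * v).im| := by simp [abs_mul]
      _ ≤ _ := abs_im_le_norm _
  rw [mpKernel, norm_div, norm_mul, norm_real, Real.norm_eq_abs,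
    div_le_div_iff₀ hd (abs_pos.2 hv)]
  nlinarith [norm_nonneg v]

lemma continuous_mpKernel (hv : v.im ≠ 0) : Continuous (mpKernel v) :=
  (by fun_prop : Continuous fun l : ℝ => (l : ℂ) * v).div (by fun_prop)
    (one_add_ofReal_mul_ne_zero hv)

lemma im_mpKernel_mul_conj (hv : v.im ≠ 0) (l : ℝ) :
    (mpKernel v l * conj v).im = -v.im * normSq (mpKernel v l) := by
  have hd := one_add_ofReal_mul_ne_zero hv l
  have hn : normSq (1 + (l : ℂ) * v) ≠ 0 := normSq_eq_zero.not.2 hd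
  rw [mpKernel, div_eq_mul_inv, normSq_mul, normSq_mul, normSq_inv, normSq_ofReal]
  simp only [mul_im, mul_re, inv_re, inv_im, conj_re, conj_im, ofReal_re, ofReal_im, add_re,
    add_im, one_re, one_im]
  rw [normSq_apply v]
  field_simp
  ring

lemma sub_mul_mpKernel_mul {v₁ v₂ : ℂ} (hv₁ : v₁.im ≠ 0) (hv₂ : v₂.im ≠ 0) (l : ℝ) :
    (v₁ - v₂) * (mpKernel v₁ l * mpKernel v₂ l) = v₁ * mpKernel v₂ l - v₂ * mpKernel v₁ l := by
  have h₁ := one_add_ofReal_mul_ne_zero hv₁ l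
  have h₂ := one_add_ofReal_mul_ne_zero hv₂ l
  simp only [mpKernel]
  rw [div_mul_div_comm, mul_div_assoc', mul_div_assoc', mul_div_assoc', div_sub_div _ _ h₂ h₁,
    div_eq_div_iff (mul_ne_zero h₁ h₂) (mul_ne_zero h₂ h₁)]
  ring

end Kernel

section Integrability

variable {μ : Measure ℝ} [IsFiniteMeasure μ] {v : ℂ}

lemma integrable_mpKernel (hv : v.im ≠ 0) : Integrable (mpKernel v) μ :=
  Integrable.of_bound (continuous_mpKernel hv).aestronglyMeasurable _
    (ae_of_all _ (norm_mpKernel_le hv))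

lemma integrable_mpKernel_mul {v₁ v₂ : ℂ} (hv₁ : v₁.im ≠ 0) (hv₂ : v₂.im ≠ 0) :
    Integrable (fun l => mpKernel v₁ l * mpKernel v₂ l) μ :=
  Integrable.of_bound
    ((continuous_mpKernel hv₁).mul (continuous_mpKernel hv₂)).aestronglyMeasurable _
    (ae_of_all _ fun l => by
      rw [norm_mul]
      exact mul_le_mul (norm_mpKernel_le hv₁ l) (norm_mpKernel_le hv₂ l) (norm_nonneg _)
        (by positivity))

lemma integrable_normSq_mpKernel (hv : v.im ≠ 0) :
    Integrable (fun l => normSq (mpKernel v l)) μ :=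
  Integrable.of_bound (continuous_normSq.comp (continuous_mpKernel hv)).aestronglyMeasurable
    ((‖v‖ / |v.im|) ^ 2) (ae_of_all _ fun l => by
      rw [Real.norm_of_nonneg (normSq_nonneg _), normSq_eq_norm_sq]
      gcongr
      exact norm_mpKernel_le hv l)

end Integrability

section KernelEquation

variable {μ : Measure ℝ} [IsFiniteMeasure μ] {c : ℝ} {w : ℂ}

lemma mul_integral_normSq_mpKernel_lt_one (hw : 0 < w.im) {v : ℂ} (hv : 0 < v.im)
    (h : w * v + 1 = c * ∫ l, mpKernel v l ∂μ) : c * ∫ l, normSq (mpKernel v l) ∂μ < 1 := by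
  have hconj : w * normSq v + conj v = c * ∫ l, mpKernel v l * conj v ∂μ := by
    rw [integral_mul_const, ← mul_assoc, ← h, add_mul, mul_assoc, mul_conj, one_mul]
  have hI : (∫ l, mpKernel v l * conj v ∂μ).im = -v.im * ∫ l, normSq (mpKernel v l) ∂μ :=
    calc _ = ∫ l, (mpKernel v l * conj v).im ∂μ :=
          (integral_im ((integrable_mpKernel hv.ne').mul_const _)).symm
      _ = _ := by simp only [im_mpKernel_mul_conj hv.ne', integral_const_mul]
  have him := congrArg im hconj
  rw [im_ofReal_mul, hI, add_im, im_mul_ofReal, conj_im] at him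
  have hv2 : 0 < normSq v := normSq_pos.2 (fun h => by simp [h] at hv)
  nlinarith [mul_pos hw hv2]

lemma eq_of_mpKernel_equation (hc : 0 ≤ c) (hw : 0 < w.im) {v₁ v₂ : ℂ} (hv₁ : 0 < v₁.im)
    (hv₂ : 0 < v₂.im) (h₁ : w * v₁ + 1 = c * ∫ l, mpKernel v₁ l ∂μ)
    (h₂ : w * v₂ + 1 = c * ∫ l, mpKernel v₂ l ∂μ) : v₁ = v₂ := by
  by_contra hne
  have hprod : (c : ℂ) * ∫ l, mpKernel v₁ l * mpKernel v₂ l ∂μ = 1 := by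
    refine mul_left_cancel₀ (sub_ne_zero.2 hne) ?_
    calc (v₁ - v₂) * (c * ∫ l, mpKernel v₁ l * mpKernel v₂ l ∂μ)
        = c * ∫ l, (v₁ - v₂) * (mpKernel v₁ l * mpKernel v₂ l) ∂μ := by
          rw [integral_const_mul]; ring
      _ = c * ∫ l, (v₁ * mpKernel v₂ l - v₂ * mpKernel v₁ l) ∂μ := by
          simp only [sub_mul_mpKernel_mul hv₁.ne' hv₂.ne']
      _ = v₁ * (c * ∫ l, mpKernel v₂ l ∂μ) - v₂ * (c * ∫ l, mpKernel v₁ l ∂μ) := by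
          rw [integral_sub ((integrable_mpKernel hv₂.ne').const_mul _)
            ((integrable_mpKernel hv₁.ne').const_mul _), integral_const_mul, integral_const_mul]
          ring
      _ = (v₁ - v₂) * 1 := by rw [← h₁, ← h₂]; ring
  have hAMGM : ‖∫ l, mpKernel v₁ l * mpKernel v₂ l ∂μ‖
      ≤ ∫ l, (normSq (mpKernel v₁ l) + normSq (mpKernel v₂ l)) / 2 ∂μ :=
    norm_integral_le_of_norm_le
      (((integrable_normSq_mpKernel hv₁.ne').add (integrable_normSq_mpKernel hv₂.ne')).div_const 2)
      (ae_of_all _ fun l => by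
        rw [norm_mul, normSq_eq_norm_sq, normSq_eq_norm_sq]
        nlinarith [sq_nonneg (‖mpKernel v₁ l‖ - ‖mpKernel v₂ l‖)])
  rw [integral_div, integral_add (integrable_normSq_mpKernel hv₁.ne')
    (integrable_normSq_mpKernel hv₂.ne')] at hAMGM
  have hnorm := congrArg norm hprod
  rw [norm_mul, norm_real, Real.norm_of_nonneg hc, norm_one] at hnorm
  have hB₁ := mul_integral_normSq_mpKernel_lt_one hw hv₁ h₁
  have hB₂ := mul_integral_normSq_mpKernel_lt_one hw hv₂ h₂
  nlinarith [mul_le_mul_of_nonneg_left hAMGM hc]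

end KernelEquation

def IsMPSolution (H : Measure ℝ) (c : ℝ) (w m : ℂ) : Prop :=
  m = ∫ l, ((l : ℂ) * (1 - c * w * m - c) - w)⁻¹ ∂H ∧ 0 < ((c : ℂ) * m + ((c : ℂ) - 1) / w).im

namespace IsMPSolution

variable {H : Measure ℝ} [IsProbabilityMeasure H] {c : ℝ} {w m : ℂ}

lemma mpKernel_equation (hw : w ≠ 0) (h : IsMPSolution H c w m) :
    w * (c * m + (c - 1) / w) + 1 = c * ∫ l, mpKernel (c * m + (c - 1) / w) l ∂H := by
  set v : ℂ := c * m + (c - 1) / w with hv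
  have hwv : w * v = c * w * m + c - 1 := by rw [hv]; field_simp; ring
  have hcoef : 1 - c * w * m - c = -(w * v) := by linear_combination hwv
  have hpt : ∀ l : ℝ, ((l : ℂ) * (1 - c * w * m - c) - w)⁻¹ = -w⁻¹ * (1 - mpKernel v l) := by
    intro l
    have hd : 1 + (l : ℂ) * v ≠ 0 := one_add_ofReal_mul_ne_zero h.2.ne' l
    rw [hcoef, show (l : ℂ) * -(w * v) - w = -w * (1 + l * v) by ring, mul_inv, inv_neg,
      mpKernel, one_sub_div hd, add_sub_cancel_right, one_div]
  have hm : m = -w⁻¹ * (1 - ∫ l, mpKernel v l ∂H) := by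
    rw [h.1]
    simp only [hpt]
    rw [integral_const_mul, integral_sub (integrable_const 1) (integrable_mpKernel h.2.ne'),
      integral_const, probReal_univ, one_smul]
  have hwm : w * m = (∫ l, mpKernel v l ∂H) - 1 := by
    rw [hm]; field_simp; ring
  linear_combination hwv + c * hwm

lemma unique (hc : 0 < c) (hw : 0 < w.im) {m' : ℂ} (h : IsMPSolution H c w m)
    (h' : IsMPSolution H c w m') : m = m' := by
  have hw0 : w ≠ 0 := fun h => by simp [h] at hw
  have hv := eq_of_mpKernel_equation hc.le hw h.2 h'.2 (h.mpKernel_equation hw0)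
    (h'.mpKernel_equation hw0)
  exact mul_left_cancel₀ (ofReal_ne_zero.2 hc.ne') (add_right_cancel hv)

end IsMPSolution

section Stieltjes

variable {w : ℂ}

lemma ofReal_sub_ne_zero_s4 (hw : w.im ≠ 0) (l : ℝ) : (l : ℂ) - w ≠ 0 := by
  intro h
  exact hw (by simpa using congrArg im h)

lemma integrable_inv_ofReal_sub_s4 {μ : Measure ℝ} [IsFiniteMeasure μ] (hw : w.im ≠ 0) :
    Integrable (fun l : ℝ => ((l : ℂ) - w)⁻¹) μ :=
  Integrable.of_bound ((by fun_prop : Continuous fun l : ℝ => (l : ℂ) - w).inv₀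
      (ofReal_sub_ne_zero_s4 hw)).aestronglyMeasurable |w.im|⁻¹
    (ae_of_all _ fun l => by
      rw [norm_inv]
      refine inv_anti₀ (abs_pos.2 hw) ?_
      simpa using abs_im_le_norm ((l : ℂ) - w))

lemma integral_ofReal_div_ofReal_sub (ν : Measure ℝ) [IsProbabilityMeasure ν] (hw : w.im ≠ 0) :
    ∫ l, (l : ℂ) / ((l : ℂ) - w) ∂ν = 1 + w * St ν w := by
  have hpt : ∀ l : ℝ, (l : ℂ) / ((l : ℂ) - w) = 1 + w * ((l : ℂ) - w)⁻¹ := fun l => by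
    have := ofReal_sub_ne_zero_s4 hw l
    field_simp
    ring
  simp only [hpt]
  rw [integral_add (integrable_const 1) ((integrable_inv_ofReal_sub_s4 hw).const_mul w),
    integral_const, integral_const_mul, probReal_univ, one_smul, St]

lemma integral_mp_rescale (H : Measure ℝ) (c : ℝ) {z s u : ℂ}
    (hu : u = 1 - c * z * s - c) (hu0 : u ≠ 0) :
    ∫ l, ((l : ℂ) * (1 - c * (u * z) * (u⁻¹ * s) - c) - u * z)⁻¹ ∂H = u⁻¹ * St H z := by
  have hcoef : 1 - c * (u * z) * (u⁻¹ * s) - c = u := by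
    rw [show (c : ℂ) * (u * z) * (u⁻¹ * s) = c * z * s by field_simp, ← hu]
  simp only [hcoef, show ∀ l : ℝ, (l : ℂ) * u - u * z = u * ((l : ℂ) - z) from
    fun l => by ring, mul_inv]
  exact integral_const_mul _ _

end Stieltjes

theorem stmt4 (H ν : MeasureTheory.Measure ℝ) (c : ℝ) (hMP : MPRel H c ν)
    (z : ℂ) (hz : 0 < z.im)
    (hPhi : 0 < ((1 - (c : ℂ) * z * St H z - (c : ℂ)) * z).im) :
    (z * St H z + 1 =
      ∫ l, (l : ℂ) / ((l : ℂ) - (1 - (c : ℂ) * z * St H z - (c : ℂ)) * z) ∂ν) ∧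
    ∀ s : ℂ, 0 < s.im → 0 < ((1 - (c : ℂ) * z * s - (c : ℂ)) * z).im →
      z * s + 1 = (∫ l, (l : ℂ) / ((l : ℂ) - (1 - (c : ℂ) * z * s - (c : ℂ)) * z) ∂ν) →
      s = St H z := by
  obtain ⟨hH, -, -, -, hc, hν, -, -, -, hMP⟩ := hMP
  have hz0 : z ≠ 0 := fun h => by simp [h] at hz
  refine ⟨?_, fun s _ hPhi' hs => ?_⟩
  · set u : ℂ := 1 - c * z * St H z - c with hu
    have hu0 : u ≠ 0 := fun h => by simp [h] at hPhi
    have hsol : IsMPSolution H c (u * z) (u⁻¹ * St H z) := by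
      refine ⟨(integral_mp_rescale H c hu hu0).symm, ?_⟩
      rw [show (c : ℂ) * (u⁻¹ * St H z) + (c - 1) / (u * z) = -z⁻¹ by
        field_simp; linear_combination -z * hu]
      simpa [neg_div] using div_pos hz (normSq_pos.2 hz0)
    rw [integral_ofReal_div_ofReal_sub ν hPhi.ne',
      IsMPSolution.unique hc hPhi (hMP (u * z) hPhi) hsol]
    field_simp
    ring
  · set u : ℂ := 1 - c * z * s - c with hu
    have hu0 : u ≠ 0 := fun h => by simp [h] at hPhi'
    rw [integral_ofReal_div_ofReal_sub ν hPhi'.ne'] at hs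
    have hSt : St ν (u * z) = u⁻¹ * s := by
      rw [eq_inv_mul_iff_mul_eq₀ hu0]
      exact mul_left_cancel₀ hz0 (by linear_combination -hs)
    have hrel := (hMP (u * z) hPhi').1
    rw [hSt, integral_mp_rescale H c hu hu0] at hrel
    exact mul_left_cancel₀ (inv_ne_zero hu0) hrel
end

section
/- Let ν̂ be any probability measure on ℝ with compact support contained in [0,∞), let c > 0 and let z ∈ ℂ⁺. Then there is at most one s ∈ ℂ satisfying all three of: z·s + 1 = ∫_ℝ λ/(λ − (1 − c·z·s − c)·z) dν̂(λ); Im((1 − c·z·s − c)·z) > 0; and c·|z|·|Im(z·s)| < Im((1 − c·z·s − c)·z). -/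
open MeasureTheory Filter Complex Set

/-- `s` is a population-Stieltjes-estimator value at `z` for `(ν, c)`. -/
def EstVal (ν : MeasureTheory.Measure ℝ) (c : ℝ) (z s : ℂ) : Prop :=
  z * s + 1 = (∫ l, (l : ℂ) / ((l : ℂ) - (1 - (c : ℂ) * z * s - (c : ℂ)) * z) ∂ν) ∧
  0 < ((1 - (c : ℂ) * z * s - (c : ℂ)) * z).im ∧
  c * ‖z‖ * |(z * s).im| < ((1 - (c : ℂ) * z * s - (c : ℂ)) * z).im

/-
If `s₁ ≠ s₂` are two solutions with `wᵢ = (1 - c z sᵢ - c) z`, subtracting the two equations gives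
`z (s₁ - s₂) = (w₁ - w₂) K` with `K = ∫ λ / ((λ - w₁)(λ - w₂)) dν̂`, and `w₁ - w₂ = -c z · z (s₁ - s₂)`,
so `c |z| |K| = 1`. Taking imaginary parts of each equation gives `Im (z sᵢ) = Im wᵢ · Aᵢ` with
`Aᵢ = ∫ λ / |λ - wᵢ|² dν̂`, so the third condition reads `c |z| Aᵢ < 1`. Since `λ ≥ 0` on the support,
`|K| ≤ (A₁ + A₂) / 2` pointwise by AM-GM, whence `1 = c |z| |K| < 1`.
-/

lemma msupport_eq_support (μ : Measure ℝ) : msupport μ = μ.support := by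
  ext x
  exact (Measure.mem_support_iff_forall x).symm

lemma ae_nonneg_of_msupport_subset_Ici {μ : Measure ℝ} (h : msupport μ ⊆ Ici 0) :
    ∀ᵐ l ∂μ, 0 ≤ l := by
  filter_upwards [msupport_eq_support μ ▸ Measure.support_mem_ae] with l hl using h hl

section Resolvent

variable {w w₁ w₂ : ℂ}

lemma ofReal_sub_ne_zero_of_im_pos (hw : 0 < w.im) (l : ℝ) : (l : ℂ) - w ≠ 0 := by
  intro h
  have := congrArg im h
  simp only [sub_im, ofReal_im, zero_im] at this
  linarith

lemma im_le_norm_ofReal_sub (w : ℂ) (l : ℝ) : w.im ≤ ‖(l : ℂ) - w‖ := by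
  simpa using (neg_le_abs _).trans (abs_im_le_norm ((l : ℂ) - w))

lemma norm_ofReal_div_ofReal_sub_le (hw : 0 < w.im) (l : ℝ) :
    ‖(l : ℂ) / ((l : ℂ) - w)‖ ≤ 1 + ‖w‖ / w.im := by
  have hne := ofReal_sub_ne_zero_of_im_pos hw l
  have hsplit : (l : ℂ) / ((l : ℂ) - w) = 1 + w / ((l : ℂ) - w) := by
    field_simp
    ring
  rw [hsplit]
  calc ‖1 + w / ((l : ℂ) - w)‖ ≤ ‖(1 : ℂ)‖ + ‖w / ((l : ℂ) - w)‖ := norm_add_le _ _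
    _ ≤ 1 + ‖w‖ / w.im := by
      rw [norm_one, norm_div]
      gcongr
      exact im_le_norm_ofReal_sub w l

lemma integrable_ofReal_div_ofReal_sub {μ : Measure ℝ} [IsFiniteMeasure μ] (hw : 0 < w.im) :
    Integrable (fun l : ℝ => (l : ℂ) / ((l : ℂ) - w)) μ := by
  have hcont : Continuous fun l : ℝ => (l : ℂ) / ((l : ℂ) - w) :=
    continuous_ofReal.div (continuous_ofReal.sub continuous_const)
      (ofReal_sub_ne_zero_of_im_pos hw)
  exact .of_bound hcont.aestronglyMeasurable _
    (.of_forall (norm_ofReal_div_ofReal_sub_le hw))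

lemma im_ofReal_div_ofReal_sub (w : ℂ) (l : ℝ) :
    ((l : ℂ) / ((l : ℂ) - w)).im = w.im * (l / normSq ((l : ℂ) - w)) := by
  rw [div_im]
  simp only [sub_re, sub_im, ofReal_re, ofReal_im]
  ring

lemma im_integral_ofReal_div_ofReal_sub {μ : Measure ℝ} [IsFiniteMeasure μ] (hw : 0 < w.im) :
    (∫ l, (l : ℂ) / ((l : ℂ) - w) ∂μ).im = w.im * ∫ l, l / normSq ((l : ℂ) - w) ∂μ := by
  rw [← integral_const_mul]
  exact (integral_im (integrable_ofReal_div_ofReal_sub hw)).symm.trans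
    (integral_congr_ae (.of_forall (im_ofReal_div_ofReal_sub w)))

lemma integrable_div_normSq_ofReal_sub {μ : Measure ℝ} [IsFiniteMeasure μ] (hw : 0 < w.im) :
    Integrable (fun l : ℝ => l / normSq ((l : ℂ) - w)) μ := by
  refine ((integrable_ofReal_div_ofReal_sub (μ := μ) hw).im.const_mul w.im⁻¹).congr
    (.of_forall fun l => ?_)
  change w.im⁻¹ * ((l : ℂ) / ((l : ℂ) - w)).im = _
  rw [im_ofReal_div_ofReal_sub, inv_mul_cancel_left₀ hw.ne']

lemma ofReal_div_ofReal_sub_sub (hw₁ : 0 < w₁.im) (hw₂ : 0 < w₂.im) (l : ℝ) :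
    (l : ℂ) / ((l : ℂ) - w₁) - (l : ℂ) / ((l : ℂ) - w₂)
      = (w₁ - w₂) * ((l : ℂ) / (((l : ℂ) - w₁) * ((l : ℂ) - w₂))) := by
  field_simp [ofReal_sub_ne_zero_of_im_pos hw₁ l, ofReal_sub_ne_zero_of_im_pos hw₂ l]
  ring

lemma norm_ofReal_div_mul_le (hw₁ : 0 < w₁.im) (hw₂ : 0 < w₂.im) {l : ℝ} (hl : 0 ≤ l) :
    ‖(l : ℂ) / (((l : ℂ) - w₁) * ((l : ℂ) - w₂))‖
      ≤ (l / normSq ((l : ℂ) - w₁) + l / normSq ((l : ℂ) - w₂)) / 2 := by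
  have ha := norm_pos_iff.mpr (ofReal_sub_ne_zero_of_im_pos hw₁ l)
  have hb := norm_pos_iff.mpr (ofReal_sub_ne_zero_of_im_pos hw₂ l)
  set a := ‖(l : ℂ) - w₁‖
  set b := ‖(l : ℂ) - w₂‖
  rw [norm_div, norm_mul, norm_real, Real.norm_of_nonneg hl, normSq_eq_norm_sq,
    normSq_eq_norm_sq]
  have key : 0 ≤ l * (1 / a - 1 / b) ^ 2 := by positivity
  have expand : l * (1 / a - 1 / b) ^ 2 = l / a ^ 2 + l / b ^ 2 - 2 * (l / (a * b)) := by
    field_simp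
    ring
  linarith

lemma norm_integral_ofReal_div_mul_le {μ : Measure ℝ} [IsFiniteMeasure μ] (hμ : ∀ᵐ l ∂μ, 0 ≤ l)
    (hw₁ : 0 < w₁.im) (hw₂ : 0 < w₂.im) :
    ‖∫ l, (l : ℂ) / (((l : ℂ) - w₁) * ((l : ℂ) - w₂)) ∂μ‖
      ≤ (∫ l, l / normSq ((l : ℂ) - w₁) ∂μ + ∫ l, l / normSq ((l : ℂ) - w₂) ∂μ) / 2 := by
  have hint := ((integrable_div_normSq_ofReal_sub (μ := μ) hw₁).add
    (integrable_div_normSq_ofReal_sub hw₂)).div_const 2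
  rw [← integral_add (integrable_div_normSq_ofReal_sub hw₁)
    (integrable_div_normSq_ofReal_sub hw₂), ← integral_div]
  exact norm_integral_le_of_norm_le hint
    (hμ.mono fun l hl => norm_ofReal_div_mul_le hw₁ hw₂ hl)

end Resolvent

section Estimator

variable {μ : Measure ℝ} [IsFiniteMeasure μ] {c : ℝ} {z s s₁ s₂ w w₁ w₂ : ℂ}

lemma mul_integral_div_normSq_lt_one (hc : 0 ≤ c) (hw : 0 < w.im)
    (heq : z * s + 1 = ∫ l, (l : ℂ) / ((l : ℂ) - w) ∂μ) (hlt : c * ‖z‖ * |(z * s).im| < w.im) :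
    c * ‖z‖ * ∫ l, l / normSq ((l : ℂ) - w) ∂μ < 1 := by
  have him : (z * s).im = w.im * ∫ l, l / normSq ((l : ℂ) - w) ∂μ := by
    have h := congrArg im heq
    rwa [add_im, one_im, add_zero, im_integral_ofReal_div_ofReal_sub hw] at h
  rw [him, abs_mul, abs_of_pos hw] at hlt
  calc c * ‖z‖ * ∫ l, l / normSq ((l : ℂ) - w) ∂μ
      ≤ c * ‖z‖ * |∫ l, l / normSq ((l : ℂ) - w) ∂μ| := by gcongr; exact le_abs_self _
    _ < 1 := by nlinarith

lemma mul_sub_eq_sub_mul_integral (hw₁ : 0 < w₁.im) (hw₂ : 0 < w₂.im)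
    (heq₁ : z * s₁ + 1 = ∫ l, (l : ℂ) / ((l : ℂ) - w₁) ∂μ)
    (heq₂ : z * s₂ + 1 = ∫ l, (l : ℂ) / ((l : ℂ) - w₂) ∂μ) :
    z * (s₁ - s₂) = (w₁ - w₂) * ∫ l, (l : ℂ) / (((l : ℂ) - w₁) * ((l : ℂ) - w₂)) ∂μ := by
  rw [← integral_const_mul, ← funext (ofReal_div_ofReal_sub_sub hw₁ hw₂),
    integral_sub (integrable_ofReal_div_ofReal_sub hw₁) (integrable_ofReal_div_ofReal_sub hw₂),
    ← heq₁, ← heq₂]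
  ring

end Estimator

theorem stmt6_general (ν : MeasureTheory.Measure ℝ) (hprob : IsProbabilityMeasure ν)
    (hpos : msupport ν ⊆ Set.Ici 0)
    (c : ℝ) (hc : 0 < c) (z : ℂ) :
    ∀ s₁ s₂ : ℂ, EstVal ν c z s₁ → EstVal ν c z s₂ → s₁ = s₂ := by
  rintro s₁ s₂ ⟨heq₁, hw₁, hlt₁⟩ ⟨heq₂, hw₂, hlt₂⟩
  by_contra hne
  have hz : z ≠ 0 := by
    rintro rfl
    simp at hw₁
  set K := ∫ l, (l : ℂ) / (((l : ℂ) - (1 - c * z * s₁ - c) * z) *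
    ((l : ℂ) - (1 - c * z * s₂ - c) * z)) ∂ν
  have hK : (c : ℂ) * z * K = -1 := by
    have hdiff := mul_sub_eq_sub_mul_integral hw₁ hw₂ heq₁ heq₂
    have hprod : z * (s₁ - s₂) * (1 + c * z * K) = 0 := by linear_combination hdiff
    linear_combination (mul_eq_zero.mp hprod).resolve_left
      (mul_ne_zero hz (sub_ne_zero.mpr hne))
  have hnormK : c * ‖z‖ * ‖K‖ = 1 := by
    simpa [norm_mul, abs_of_pos hc] using congrArg norm hK
  have hA₁ := mul_integral_div_normSq_lt_one hc.le hw₁ heq₁ hlt₁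
  have hA₂ := mul_integral_div_normSq_lt_one hc.le hw₂ heq₂ hlt₂
  have hKle := norm_integral_ofReal_div_mul_le (ae_nonneg_of_msupport_subset_Ici hpos) hw₁ hw₂
  have hcz : 0 ≤ c * ‖z‖ := by positivity
  linarith [mul_le_mul_of_nonneg_left hKle hcz]

theorem stmt6 (ν : MeasureTheory.Measure ℝ) (hprob : IsProbabilityMeasure ν)
    (hcomp : IsCompact (msupport ν)) (hpos : msupport ν ⊆ Set.Ici 0)
    (c : ℝ) (hc : 0 < c) (z : ℂ) (hz : 0 < z.im) :
    ∀ s₁ s₂ : ℂ, EstVal ν c z s₁ → EstVal ν c z s₂ → s₁ = s₂ :=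
  stmt6_general ν hprob hpos c hc z
end
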